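/- Let T be a self-similar tree, let Ā be a minimal covering quotient of T, and let π : T → Ā be a covering morphism. Then every automorphism g of T is type-preserving with respect to π: π₀(g₀(v)) = π₀(v) for every vertex v of T. -/

import Mathlib

/-- A rooted directed multigraph. -/
structure RGraph where
  V : Type
  E : Type
  s : E → V
  t : E → V
  root : V

namespace RGraph

/-- `l` is a path: consecutive edges are composable. -/
def IsPath (A : RGraph) (l : List A.E) : Prop :=
  l.Chain' (fun e f => A.t e = A.s f)

/-- `l` is a path starting at the vertex `q`. -/
def PathFrom (A : RGraph) (q : A.V) (l : List A.E) : Prop :=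
  A.IsPath l ∧ ∀ e ∈ l.head?, A.s e = q

/-- The target of the path `l` started at `q` (equal to `q` for the empty path). -/
def pathTarget (A : RGraph) (q : A.V) (l : List A.E) : A.V :=
  l.foldl (fun _ e => A.t e) q

@[simp] lemma pathTarget_nil (A : RGraph) (q : A.V) : A.pathTarget q [] = q := rfl

@[simp] lemma pathTarget_cons (A : RGraph) (q : A.V) (a : A.E) (l : List A.E) :
    A.pathTarget q (a :: l) = A.pathTarget (A.t a) l := rfl

lemma pathTarget_append (A : RGraph) (q : A.V) (l l' : List A.E) :
    A.pathTarget q (l ++ l') = A.pathTarget (A.pathTarget q l) l' := by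
  simp [pathTarget]

@[simp] lemma pathTarget_append_single (A : RGraph) (q : A.V) (l : List A.E) (e : A.E) :
    A.pathTarget q (l ++ [e]) = A.t e := by
  rw [pathTarget_append]; rfl

lemma pathFrom_nil (A : RGraph) (q : A.V) : A.PathFrom q [] :=
  ⟨List.isChain_nil, by simp⟩

lemma pathTarget_getLast {A : RGraph} {q : A.V} {l : List A.E} {x : A.E}
    (hx : x ∈ l.getLast?) : A.pathTarget q l = A.t x := by
  induction l generalizing q with
  | nil => simp at hx
  | cons a l ih =>
    cases l with
    | nil => simp at hx; subst hx; rfl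
    | cons b l =>
      rw [List.getLast?_cons_cons] at hx
      simpa using ih (q := A.t a) hx

lemma pathFrom_append_single {A : RGraph} {q : A.V} {l : List A.E} {e : A.E}
    (h : A.PathFrom q l) (he : A.s e = A.pathTarget q l) :
    A.PathFrom q (l ++ [e]) := by
  constructor
  · apply List.isChain_append.mpr
    refine ⟨h.1, List.isChain_singleton _, ?_⟩
    intro x hx y hy
    simp at hy
    subst hy
    rw [he]
    exact (pathTarget_getLast hx).symm
  · intro f hf
    cases l with
    | nil =>
      simp at hf
      subst hf
      simpa using he
    | cons a l =>
      simp at hf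
      subst hf
      exact h.2 a (by simp)

/-- `w` is reachable from `q` by an oriented path. -/
def Reach (A : RGraph) (q w : A.V) : Prop :=
  ∃ l, A.PathFrom q l ∧ A.pathTarget q l = w

lemma reach_self (A : RGraph) (q : A.V) : A.Reach q q :=
  ⟨[], A.pathFrom_nil q, rfl⟩

lemma reach_target {A : RGraph} {q : A.V} {e : A.E} (h : A.Reach q (A.s e)) :
    A.Reach q (A.t e) := by
  obtain ⟨l, hl, ht⟩ := h
  exact ⟨l ++ [e], pathFrom_append_single hl ht.symm, by simp⟩

/-- A graph is connected (as a rooted directed graph) if every vertex is reachable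
from the root. -/
def Connected (A : RGraph) : Prop := ∀ w : A.V, A.Reach A.root w

/-- A graph is a tree if the target map from paths emanating from the root to
vertices is a bijection. -/
def IsTree (A : RGraph) : Prop :=
  Function.Bijective
    (fun l : {l : List A.E // A.PathFrom A.root l} => A.pathTarget A.root l.1)

/-- A graph is locally finite if every vertex has finitely many outgoing edges. -/
def LocallyFinite (A : RGraph) : Prop := ∀ q : A.V, Finite {e : A.E // A.s e = q}

/-- Adjacency: there is an edge from `v` to `w`. -/
def Adj (A : RGraph) (v w : A.V) : Prop := ∃ e, A.s e = v ∧ A.t e = w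

/-- The induced rooted subgraph on all vertices reachable from `q` (the "cone" at `q`). -/
def subgraph (A : RGraph) (q : A.V) : RGraph where
  V := {w // A.Reach q w}
  E := {e // A.Reach q (A.s e)}
  s := fun e => ⟨A.s e.1, e.2⟩
  t := fun e => ⟨A.t e.1, reach_target e.2⟩
  root := ⟨q, A.reach_self q⟩

/-- The truncation of the cone at `v` to vertices at distance at most `d` from `v`. -/
def trunc (A : RGraph) (v : A.V) (d : ℕ) : RGraph where
  V := {w // ∃ l, A.PathFrom v l ∧ A.pathTarget v l = w ∧ l.length ≤ d}
  E := {e // ∃ l, A.PathFrom v l ∧ A.pathTarget v l = A.s e ∧ l.length < d}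
  s := fun e => ⟨A.s e.1, e.2.imp fun _ h => ⟨h.1, h.2.1, h.2.2.le⟩⟩
  t := fun e => ⟨A.t e.1, by
    obtain ⟨l, h1, h2, h3⟩ := e.2
    exact ⟨l ++ [e.1], pathFrom_append_single h1 h2.symm, by simp,
      by simp only [List.length_append, List.length_singleton]; omega⟩⟩
  root := ⟨v, [], A.pathFrom_nil v, rfl, Nat.zero_le d⟩

/-- The universal covering tree of `A`: vertices are the paths emanating from the root. -/
def cover (A : RGraph) : RGraph where
  V := {l : List A.E // A.PathFrom A.root l}
  E := {x : {l : List A.E // A.PathFrom A.root l} × A.E //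
          A.s x.2 = A.pathTarget A.root x.1.1}
  s := fun x => x.1.1
  t := fun x => ⟨x.1.1.1 ++ [x.1.2], pathFrom_append_single x.1.1.2 x.2⟩
  root := ⟨[], A.pathFrom_nil _⟩

end RGraph

/-- A morphism of rooted directed multigraphs. -/
structure GraphHom (A B : RGraph) where
  v : A.V → B.V
  e : A.E → B.E
  root_eq : v A.root = B.root
  s_eq : ∀ x, B.s (e x) = v (A.s x)
  t_eq : ∀ x, B.t (e x) = v (A.t x)

namespace GraphHom

variable {A B : RGraph}

/-- The unique path lifting property. -/
def UPLP (p : GraphHom A B) : Prop :=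
  ∀ (q : A.V) (l' : List B.E), B.PathFrom (p.v q) l' →
    ∃! l : List A.E, A.PathFrom q l ∧ l.map p.e = l'

/-- A covering morphism: surjective on vertices, with the unique path lifting property. -/
def IsCovering (p : GraphHom A B) : Prop := Function.Surjective p.v ∧ p.UPLP

/-- An isomorphism of graphs: bijective on vertices and on edges. -/
def IsIso (p : GraphHom A B) : Prop := Function.Bijective p.v ∧ Function.Bijective p.e

/-- The restriction of the edge map to the edges emanating from `q`. -/
def outMap (p : GraphHom A B) (q : A.V) :
    {e : A.E // A.s e = q} → {e' : B.E // B.s e' = p.v q} :=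
  fun e => ⟨p.e e.1, by rw [p.s_eq, e.2]⟩

lemma isPath_map (p : GraphHom A B) {l : List A.E} (h : A.IsPath l) :
    B.IsPath (l.map p.e) := by
  unfold RGraph.IsPath List.Chain' at *
  rw [List.isChain_map]
  exact List.IsChain.imp (fun a b hab => by rw [p.t_eq, p.s_eq, hab]) h

lemma pathFrom_map (p : GraphHom A B) {q : A.V} {l : List A.E} (h : A.PathFrom q l) :
    B.PathFrom (p.v q) (l.map p.e) := by
  refine ⟨p.isPath_map h.1, ?_⟩
  intro f hf
  cases l with
  | nil => simp at hf
  | cons a l =>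
    simp at hf
    subst hf
    rw [p.s_eq, h.2 a (by simp)]

lemma pathTarget_map (p : GraphHom A B) (q : A.V) (l : List A.E) :
    B.pathTarget (p.v q) (l.map p.e) = p.v (A.pathTarget q l) := by
  induction l generalizing q with
  | nil => rfl
  | cons a l ih =>
    show B.pathTarget (B.t (p.e a)) (l.map p.e) = _
    rw [p.t_eq]
    exact ih (A.t a)

lemma reach_map (p : GraphHom A B) {q w : A.V} (h : A.Reach q w) :
    B.Reach (p.v q) (p.v w) := by
  obtain ⟨l, hl, ht⟩ := h
  exact ⟨l.map p.e, p.pathFrom_map hl, by rw [p.pathTarget_map, ht]⟩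

end GraphHom

/-- Two graphs are isomorphic. -/
def RGraph.Iso (A B : RGraph) : Prop := ∃ p : GraphHom A B, p.IsIso

/-- The universal covering morphism from the universal covering tree of `A` to `A`. -/
def RGraph.uCover (A : RGraph) : GraphHom A.cover A where
  v := fun l => A.pathTarget A.root l.1
  e := fun x => x.1.2
  root_eq := rfl
  s_eq := fun x => x.2
  t_eq := fun x => by
    show A.t x.1.2 = A.pathTarget A.root (x.1.1.1 ++ [x.1.2])
    simp

/-- The morphism induced between universal covering trees by a morphism of graphs. -/
def GraphHom.coverMap {A B : RGraph} (p : GraphHom A B) : GraphHom A.cover B.cover where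
  v := fun l => ⟨l.1.map p.e, by have := p.pathFrom_map l.2; rwa [p.root_eq] at this⟩
  e := fun x =>
    ⟨(⟨x.1.1.1.map p.e, by have := p.pathFrom_map x.1.1.2; rwa [p.root_eq] at this⟩,
      p.e x.1.2), by
        show B.s (p.e x.1.2) = B.pathTarget B.root (x.1.1.1.map p.e)
        rw [p.s_eq, x.2, ← p.root_eq, p.pathTarget_map]⟩
  root_eq := Subtype.ext rfl
  s_eq := fun _ => rfl
  t_eq := fun x => by
    apply Subtype.ext
    simp [RGraph.cover]

/-- `A` is a covering quotient of `T`. -/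
def IsCovQuotient (T A : RGraph) : Prop := ∃ p : GraphHom T A, p.IsCovering

/-- `A` is a minimal covering quotient of `T`: a covering quotient with the minimal
number of vertices among all covering quotients of `T`. -/
def IsMinCovQuotient (T A : RGraph) : Prop :=
  IsCovQuotient T A ∧
    ∀ B : RGraph, IsCovQuotient T B → Cardinal.mk A.V ≤ Cardinal.mk B.V

/-- `T` has finitely many cone types. -/
def FinManyCones (T : RGraph) : Prop :=
  ∃ S : Set T.V, S.Finite ∧ ∀ v : T.V, ∃ w ∈ S, RGraph.Iso (T.subgraph v) (T.subgraph w)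

/-- A self-similar tree: a locally finite tree with finitely many cone types. -/
def SelfSimilarTree (T : RGraph) : Prop := T.IsTree ∧ T.LocallyFinite ∧ FinManyCones T

namespace RGraph

/-- The automorphism group of a graph, realized as the group of root-preserving,
adjacency-preserving permutations of the vertex set (for trees this is the same as the
automorphism group in the sense of graph morphisms, since in a tree an edge is determined
by its endpoints). -/
def autGroup (T : RGraph) : Subgroup (Equiv.Perm T.V) where
  carrier := {g | g T.root = T.root ∧ ∀ v w, T.Adj v w ↔ T.Adj (g v) (g w)}
  one_mem' := ⟨rfl, fun _ _ => Iff.rfl⟩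
  mul_mem' := by
    rintro a b ⟨ha1, ha2⟩ ⟨hb1, hb2⟩
    refine ⟨?_, fun v w => ?_⟩
    · show a (b T.root) = T.root
      rw [hb1, ha1]
    · exact (hb2 v w).trans (ha2 (b v) (b w))
  inv_mem' := by
    rintro a ⟨ha1, ha2⟩
    refine ⟨?_, fun v w => ?_⟩
    · show a.symm T.root = T.root
      rw [Equiv.symm_apply_eq]
      exact ha1.symm
    · have h := ha2 (a⁻¹ v) (a⁻¹ w)
      simpa using h.symm

/-- The subgroup of permutations of the vertices fixing every vertex outside
of the cone at `v`. -/
def fixOutside (T : RGraph) (v : T.V) : Subgroup (Equiv.Perm T.V) where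
  carrier := {g | ∀ w, ¬ T.Reach v w → g w = w}
  one_mem' := fun _ _ => rfl
  mul_mem' := by
    intro a b ha hb w hw
    show a (b w) = w
    rw [hb w hw, ha w hw]
  inv_mem' := by
    intro a ha w hw
    show a.symm w = w
    rw [Equiv.symm_apply_eq]
    exact (ha w hw).symm

/-- The rigid stabilizer of the vertex `v`: automorphisms fixing every vertex
outside the subtree spanned by `v` and its descendants. -/
def rist (T : RGraph) (v : T.V) : Subgroup (Equiv.Perm T.V) :=
  T.autGroup ⊓ T.fixOutside v

/-- The set of vertices at distance `n` from the root. -/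
def level (T : RGraph) (n : ℕ) : Set T.V :=
  {v | ∃ l : List T.E, T.PathFrom T.root l ∧ T.pathTarget T.root l = v ∧ l.length = n}

/-- The `n`-th rigid level stabilizer: the subgroup generated by the rigid stabilizers
of the vertices at distance `n` from the root. -/
def ristLevel (T : RGraph) (n : ℕ) : Subgroup (Equiv.Perm T.V) :=
  ⨆ v ∈ T.level n, T.rist v

/-- The `n`-th rigid level stabilizer, as a subgroup of the automorphism group. -/
def ristIn (T : RGraph) (n : ℕ) : Subgroup ↥T.autGroup :=
  (T.ristLevel n).comap T.autGroup.subtype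

end RGraph

/-- A recurrent double edge: a pair of distinct parallel edges such that there is an
oriented loop which contains one of them, or from which their common source can be
reached. -/
def HasRecDoubleEdge (A : RGraph) : Prop :=
  ∃ e₁ e₂ : A.E, e₁ ≠ e₂ ∧ A.s e₁ = A.s e₂ ∧ A.t e₁ = A.t e₂ ∧
    ((∃ (q : A.V) (l : List A.E),
        A.PathFrom q l ∧ l ≠ [] ∧ A.pathTarget q l = q ∧ (e₁ ∈ l ∨ e₂ ∈ l)) ∨
     (∃ (q : A.V) (l : List A.E),
        A.PathFrom q l ∧ l ≠ [] ∧ A.pathTarget q l = q ∧ A.Reach q (A.s e₁)))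

/-- A deterministic finite automaton over the alphabet `A`, with a partial transition
function, a single initial state, and all states accepting. -/
structure PDFA (A : Type) where
  Q : Type
  finQ : Finite Q
  neQ : Nonempty Q
  δ : Q → A → Option Q
  init : Q

namespace PDFA

variable {A : Type} (M : PDFA A)

/-- Running the automaton from state `q` on a word; `none` if it gets stuck. -/
def run : M.Q → List A → Option M.Q
  | q, [] => some q
  | q, a :: w => (M.δ q a).bind fun q' => run q' w

/-- The regular language accepted by `M`. -/
def Lang : Set (List A) := {w | (M.run M.init w).isSome}

lemma run_append (q : M.Q) (u w : List A) :
    M.run q (u ++ w) = (M.run q u).bind fun q' => M.run q' w := by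
  induction u generalizing q with
  | nil => simp [run]
  | cons a u ih =>
    simp only [List.cons_append, run]
    cases M.δ q a with
    | none => simp
    | some q' => simp [ih]

lemma isSome_of_append {q : M.Q} {u w : List A}
    (h : (M.run q (u ++ w)).isSome) : (M.run q u).isSome := by
  rw [run_append] at h
  cases hu : M.run q u with
  | none => rw [hu] at h; simp at h
  | some q' => simp

/-- The path language tree of `M`: the tree whose vertices are the words of the
language of `M`, with an edge from `w` to `w ++ [a]` whenever both belong to the
language. -/
def pathTree : RGraph where
  V := {w : List A // (M.run M.init w).isSome}
  E := {x : List A × A // (M.run M.init (x.1 ++ [x.2])).isSome}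
  s := fun x => ⟨x.1.1, M.isSome_of_append x.2⟩
  t := fun x => ⟨x.1.1 ++ [x.1.2], x.2⟩
  root := ⟨[], by simp [run]⟩

/-- The underlying rooted directed multigraph of the automaton `M`. -/
def underlying : RGraph where
  V := M.Q
  E := {x : M.Q × A // (M.δ x.1 x.2).isSome}
  s := fun x => x.1.1
  t := fun x => (M.δ x.1.1 x.1.2).get x.2
  root := M.init

/-- `M` is geometrically minimal: it has the minimal number of states among all DFAs
(over arbitrary finite nonempty alphabets) whose path language trees are isomorphic,
as unlabelled rooted trees, to the path language tree of `M`. -/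
def GeomMinimal : Prop :=
  ∀ (B : Type), Finite B → Nonempty B → ∀ N : PDFA B,
    RGraph.Iso M.pathTree N.pathTree → Nat.card M.Q ≤ Nat.card N.Q

/-- The state reached after reading the word `w` of the language. -/
def qstate (w : List A) (h : (M.run M.init w).isSome) : M.Q :=
  (M.run M.init w).get h

/-- The group of admissible permutations at the state `q`: permutations `τ` of the
alphabet fixing the letters outside `Σ(q)` and satisfying `δ(q, τ a) = δ(q, a)`. -/
def SymQ (q : M.Q) : Subgroup (Equiv.Perm A) where
  carrier := {τ | ∀ a, M.δ q (τ a) = M.δ q a ∧ (M.δ q a = none → τ a = a)}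
  one_mem' := fun _ => ⟨rfl, fun _ => rfl⟩
  mul_mem' := by
    intro τ₁ τ₂ h1 h2 a
    constructor
    · show M.δ q (τ₁ (τ₂ a)) = M.δ q a
      rw [(h1 (τ₂ a)).1, (h2 a).1]
    · intro hn
      show τ₁ (τ₂ a) = a
      rw [(h2 a).2 hn, (h1 a).2 hn]
  inv_mem' := by
    intro τ h a
    have h1 := (h (τ.symm a)).1
    rw [Equiv.apply_symm_apply] at h1
    constructor
    · show M.δ q (τ.symm a) = M.δ q a
      exact h1.symm
    · intro hn
      have h2 := (h (τ.symm a)).2 (h1.symm.trans hn)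
      rw [Equiv.apply_symm_apply] at h2
      show τ.symm a = a
      exact h2.symm

end PDFA

/-- Extending a portrait to a map on words (the first argument is the accumulated
prefix): the `i`-th letter of the image word is the image of the `i`-th letter under
the local injection at the prefix of length `i - 1`. -/
def portraitExtend {A : Type} (σ : List A → A → A) : List A → List A → List A
  | _, [] => []
  | pre, a :: w => σ pre a :: portraitExtend σ (pre ++ [a]) w

/-!
Two vertices of a tree lying over the same vertex of a covering quotient have isomorphic cones,
since each cone is the universal cover of the quotient rerooted at that vertex. Hence every
covering quotient maps onto the set of cone types. Conversely, collapsing `T` by cone types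
(keeping, for each type, the outgoing edges of one representative) is itself a covering
quotient, with exactly as many vertices as there are cone types. So for a minimal covering
quotient the map to cone types is a bijection: `π₀ v = π₀ w` iff the cones at `v` and `w` are
isomorphic, and an automorphism maps each cone isomorphically onto the cone at the image.
-/

namespace RGraph

variable {A : RGraph}

lemma pathFrom_cons_iff {q : A.V} {e : A.E} {l : List A.E} :
    A.PathFrom q (e :: l) ↔ A.s e = q ∧ A.PathFrom (A.t e) l := by
  constructor
  · rintro ⟨hc, hh⟩
    have hc' := List.isChain_cons.1 hc
    exact ⟨hh e rfl, hc'.2, fun f hf => (hc'.1 f hf).symm⟩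
  · rintro ⟨he, hc, hh⟩
    refine ⟨List.isChain_cons.2 ⟨fun f hf => (hh f hf).symm, hc⟩, ?_⟩
    simpa using he

lemma pathFrom_append {q : A.V} {l l' : List A.E} (h : A.PathFrom q l)
    (h' : A.PathFrom (A.pathTarget q l) l') : A.PathFrom q (l ++ l') := by
  induction l generalizing q with
  | nil => exact h'
  | cons e l ih =>
    rw [pathFrom_cons_iff] at h
    exact pathFrom_cons_iff.2 ⟨h.1, ih h.2 h'⟩

lemma reach_trans {q w x : A.V} (h₁ : A.Reach q w) (h₂ : A.Reach w x) : A.Reach q x := by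
  obtain ⟨l, hl, rfl⟩ := h₁
  obtain ⟨l', hl', rfl⟩ := h₂
  exact ⟨l ++ l', pathFrom_append hl hl', pathTarget_append A q l l'⟩

lemma reach_of_reach_target {e : A.E} {x : A.V} (h : A.Reach (A.t e) x) :
    A.Reach (A.s e) x := by
  obtain ⟨l, hl, ht⟩ := h
  exact ⟨e :: l, pathFrom_cons_iff.2 ⟨rfl, hl⟩, ht⟩

lemma IsTree.injective_pathTarget (hT : A.IsTree) (v : A.V) :
    Function.Injective (fun l : {l : List A.E // A.PathFrom v l} => A.pathTarget v l.1) := by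
  rintro ⟨l₁, h₁⟩ ⟨l₂, h₂⟩ (ht : A.pathTarget v l₁ = A.pathTarget v l₂)
  obtain ⟨⟨l₀, hl₀⟩, rfl⟩ := hT.2 v
  have := @hT.1 ⟨l₀ ++ l₁, pathFrom_append hl₀ h₁⟩ ⟨l₀ ++ l₂, pathFrom_append hl₀ h₂⟩
    (by simp only [pathTarget_append, ht])
  exact Subtype.ext (List.append_cancel_left (congrArg Subtype.val this))

def withRoot (A : RGraph) (q : A.V) : RGraph := { A with root := q }

end RGraph

structure GraphEquiv (A B : RGraph) where
  v : A.V ≃ B.V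
  e : A.E ≃ B.E
  root_eq : v A.root = B.root
  s_eq : ∀ x, B.s (e x) = v (A.s x)
  t_eq : ∀ x, B.t (e x) = v (A.t x)

namespace GraphEquiv

variable {A B C : RGraph}

def toHom (φ : GraphEquiv A B) : GraphHom A B := ⟨φ.v, φ.e, φ.root_eq, φ.s_eq, φ.t_eq⟩

noncomputable def ofIsIso (p : GraphHom A B) (hp : p.IsIso) : GraphEquiv A B :=
  ⟨.ofBijective p.v hp.1, .ofBijective p.e hp.2, p.root_eq, p.s_eq, p.t_eq⟩

def refl (A : RGraph) : GraphEquiv A A :=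
  ⟨.refl _, .refl _, rfl, fun _ => rfl, fun _ => rfl⟩

def symm (φ : GraphEquiv A B) : GraphEquiv B A where
  v := φ.v.symm
  e := φ.e.symm
  root_eq := by rw [Equiv.symm_apply_eq, φ.root_eq]
  s_eq x := by rw [Equiv.eq_symm_apply, ← φ.s_eq, Equiv.apply_symm_apply]
  t_eq x := by rw [Equiv.eq_symm_apply, ← φ.t_eq, Equiv.apply_symm_apply]

def trans (φ : GraphEquiv A B) (ψ : GraphEquiv B C) : GraphEquiv A C where
  v := φ.v.trans ψ.v
  e := φ.e.trans ψ.e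
  root_eq := by simp [φ.root_eq, ψ.root_eq]
  s_eq x := by simp [φ.s_eq, ψ.s_eq]
  t_eq x := by simp [φ.t_eq, ψ.t_eq]

lemma iso (φ : GraphEquiv A B) : A.Iso B := ⟨φ.toHom, φ.v.bijective, φ.e.bijective⟩

lemma reach_iff (φ : GraphEquiv A B) {x y : A.V} : B.Reach (φ.v x) (φ.v y) ↔ A.Reach x y := by
  refine ⟨fun h => ?_, φ.toHom.reach_map⟩
  simpa [symm, toHom] using φ.symm.toHom.reach_map h

def subgraph (φ : GraphEquiv A B) (w : A.V) :
    GraphEquiv (A.subgraph w) (B.subgraph (φ.v w)) where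
  v := φ.v.subtypeEquiv fun _ => φ.reach_iff.symm
  e := φ.e.subtypeEquiv fun x => by rw [φ.s_eq, φ.reach_iff]
  root_eq := rfl
  s_eq x := Subtype.ext (φ.s_eq x.1)
  t_eq x := Subtype.ext (φ.t_eq x.1)

end GraphEquiv

namespace RGraph

variable {A B C : RGraph}

lemma iso_iff_nonempty_graphEquiv : A.Iso B ↔ Nonempty (GraphEquiv A B) :=
  ⟨fun ⟨p, hp⟩ => ⟨.ofIsIso p hp⟩, fun ⟨φ⟩ => φ.iso⟩

lemma Iso.refl (A : RGraph) : A.Iso A := (GraphEquiv.refl A).iso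

lemma Iso.symm (h : A.Iso B) : B.Iso A :=
  (Classical.choice (iso_iff_nonempty_graphEquiv.1 h)).symm.iso

lemma Iso.trans (h₁ : A.Iso B) (h₂ : B.Iso C) : A.Iso C :=
  ((Classical.choice (iso_iff_nonempty_graphEquiv.1 h₁)).trans
    (Classical.choice (iso_iff_nonempty_graphEquiv.1 h₂))).iso

lemma reach_subgraph_iff {v : A.V} {x y : (A.subgraph v).V} :
    (A.subgraph v).Reach x y ↔ A.Reach x.1 y.1 := by
  constructor
  · rintro ⟨l, hl, rfl⟩
    induction l generalizing x with
    | nil => exact A.reach_self _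
    | cons a l ih =>
      rw [pathFrom_cons_iff] at hl
      rw [← hl.1]
      exact reach_of_reach_target (ih hl.2)
  · rintro ⟨l, hl, ht⟩
    induction l generalizing x with
    | nil => exact Subtype.ext ht ▸ (A.subgraph v).reach_self x
    | cons a l ih =>
      rw [pathFrom_cons_iff] at hl
      have ha : A.Reach v (A.s a) := hl.1 ▸ x.2
      have hx : (A.subgraph v).s ⟨a, ha⟩ = x := Subtype.ext hl.1
      exact hx ▸ reach_of_reach_target (ih (x := (A.subgraph v).t ⟨a, ha⟩) hl.2 ht)

def subgraphSubgraphEquiv {v : A.V} (w : (A.subgraph v).V) :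
    GraphEquiv ((A.subgraph v).subgraph w) (A.subgraph w.1) where
  v := { toFun := fun x => ⟨x.1.1, reach_subgraph_iff.1 x.2⟩
         invFun := fun y => ⟨⟨y.1, reach_trans w.2 y.2⟩, reach_subgraph_iff.2 y.2⟩
         left_inv := fun _ => rfl
         right_inv := fun _ => rfl }
  e := { toFun := fun x => ⟨x.1.1, reach_subgraph_iff.1 x.2⟩
         invFun := fun y => ⟨⟨y.1, reach_trans w.2 y.2⟩, reach_subgraph_iff.2 y.2⟩
         left_inv := fun _ => rfl
         right_inv := fun _ => rfl }
  root_eq := rfl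
  s_eq _ := rfl
  t_eq _ := rfl

lemma iso_subgraph_of_graphEquiv {v v' : A.V} (φ : GraphEquiv (A.subgraph v) (A.subgraph v'))
    (w : (A.subgraph v).V) : (A.subgraph w.1).Iso (A.subgraph (φ.v w).1) :=
  ((subgraphSubgraphEquiv w).symm.trans ((φ.subgraph w).trans (subgraphSubgraphEquiv _))).iso

end RGraph

namespace GraphHom

variable {A B : RGraph} {p : GraphHom A B}

lemma UPLP.map_injective (hp : p.UPLP) {q : A.V} {l m : List A.E} (hl : A.PathFrom q l)
    (hm : A.PathFrom q m) (h : l.map p.e = m.map p.e) : l = m :=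
  (hp q _ (p.pathFrom_map hl)).unique ⟨hl, rfl⟩ ⟨hm, h.symm⟩

lemma UPLP.outMap_bijective (hp : p.UPLP) (q : A.V) : Function.Bijective (p.outMap q) := by
  constructor
  · rintro ⟨e₁, h₁⟩ ⟨e₂, h₂⟩ h
    have h' : [e₁].map p.e = [e₂].map p.e :=
      congrArg (fun x : {f : B.E // B.s f = p.v q} => [x.1]) h
    exact Subtype.ext (List.singleton_inj.1 (hp.map_injective
      (RGraph.pathFrom_cons_iff.2 ⟨h₁, A.pathFrom_nil _⟩)
      (RGraph.pathFrom_cons_iff.2 ⟨h₂, A.pathFrom_nil _⟩) h'))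
  · rintro ⟨f, hf⟩
    obtain ⟨l, ⟨hl, hlf⟩, -⟩ :=
      hp q [f] (RGraph.pathFrom_cons_iff.2 ⟨hf, B.pathFrom_nil _⟩)
    obtain ⟨e, rfl, rfl⟩ := List.map_eq_singleton_iff.1 hlf
    exact ⟨⟨e, (RGraph.pathFrom_cons_iff.1 hl).1⟩, rfl⟩

lemma uplp_of_outMap_bijective (h : ∀ q, Function.Bijective (p.outMap q)) : p.UPLP := by
  intro q l' hl'
  induction l' generalizing q with
  | nil => exact ⟨[], ⟨A.pathFrom_nil q, rfl⟩, fun l hl => List.map_eq_nil_iff.1 hl.2⟩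
  | cons f l' ih =>
    rw [RGraph.pathFrom_cons_iff] at hl'
    obtain ⟨⟨e, he⟩, hef⟩ := (h q).surjective ⟨f, hl'.1⟩
    have hef : p.e e = f := congrArg Subtype.val hef
    obtain ⟨l, ⟨hl, hll'⟩, hlu⟩ := ih (A.t e) (by rw [← p.t_eq, hef]; exact hl'.2)
    refine ⟨e :: l, ⟨RGraph.pathFrom_cons_iff.2 ⟨he, hl⟩, by simp [hef, hll']⟩, ?_⟩
    rintro (_ | ⟨e', m⟩) ⟨hm, hmf⟩
    · simp at hmf
    · simp only [List.map_cons, List.cons.injEq] at hmf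
      rw [RGraph.pathFrom_cons_iff] at hm
      obtain rfl : e' = e := congrArg Subtype.val <| (h q).injective (a₁ := ⟨e', hm.1⟩)
        (a₂ := ⟨e, he⟩) (Subtype.ext (hmf.1.trans hef.symm))
      rw [hlu m ⟨hm.2, hmf.2⟩]

def reroot (p : GraphHom A B) (q : A.V) : GraphHom (A.withRoot q) (B.withRoot (p.v q)) :=
  ⟨p.v, p.e, rfl, p.s_eq, p.t_eq⟩

lemma UPLP.isIso_coverMap (hp : p.UPLP) : p.coverMap.IsIso := by
  have hv : Function.Bijective p.coverMap.v := by
    refine ⟨fun l m h => Subtype.ext (hp.map_injective l.2 m.2 (congrArg Subtype.val h)), ?_⟩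
    rintro ⟨l', hl'⟩
    rw [← p.root_eq] at hl'
    obtain ⟨l, ⟨hl, rfl⟩, -⟩ := hp _ _ hl'
    exact ⟨⟨l, hl⟩, rfl⟩
  refine ⟨hv, ?_, ?_⟩
  · rintro ⟨⟨l, e⟩, he⟩ ⟨⟨m, f⟩, hf⟩ h
    obtain rfl : l = m := hv.1 (congrArg (fun x => x.1.1) h)
    have hef : p.e e = p.e f := congrArg (fun x => x.1.2) h
    obtain rfl : e = f := congrArg Subtype.val ((hp.outMap_bijective _).injective
      (a₁ := ⟨e, he⟩) (a₂ := ⟨f, hf⟩) (Subtype.ext hef))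
    rfl
  · rintro ⟨⟨l', f⟩, hf⟩
    obtain ⟨l, rfl⟩ := hv.2 l'
    have hf' : B.s f = p.v (A.pathTarget A.root l.1) := by
      rw [hf, ← p.pathTarget_map, p.root_eq]
      rfl
    obtain ⟨⟨e, he⟩, hef⟩ := (hp.outMap_bijective _).surjective ⟨f, hf'⟩
    exact ⟨⟨(l, e), he⟩, Subtype.ext (Prod.ext rfl (congrArg Subtype.val hef))⟩

end GraphHom

namespace RGraph

variable {A T : RGraph}

def coverToSubgraph (A : RGraph) (q : A.V) : GraphHom (A.withRoot q).cover (A.subgraph q) where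
  v l := ⟨A.pathTarget q l.1, l.1, l.2, rfl⟩
  e x := ⟨x.1.2, x.1.1.1, x.1.1.2, x.2.symm⟩
  root_eq := rfl
  s_eq x := Subtype.ext x.2
  t_eq x := Subtype.ext (pathTarget_append_single A q x.1.1.1 x.1.2).symm

lemma IsTree.isIso_coverToSubgraph (hT : T.IsTree) (q : T.V) : (T.coverToSubgraph q).IsIso := by
  refine ⟨⟨fun l m h => hT.injective_pathTarget q (congrArg Subtype.val h), ?_⟩, ?_, ?_⟩
  · rintro ⟨w, l, hl, rfl⟩
    exact ⟨⟨l, hl⟩, rfl⟩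
  · rintro ⟨⟨l, e⟩, he⟩ ⟨⟨m, f⟩, hf⟩ h
    obtain rfl : e = f := congrArg Subtype.val h
    obtain rfl : l = m := hT.injective_pathTarget q (he.symm.trans hf)
    rfl
  · rintro ⟨e, l, hl, he⟩
    exact ⟨⟨(⟨l, hl⟩, e), he.symm⟩, rfl⟩

/-- Both cones are isomorphic to the universal cover of `A` rerooted at `p.v v = p.v w`. -/
lemma IsTree.iso_subgraph_of_uplp (hT : T.IsTree) {p : GraphHom T A} (hp : p.UPLP)
    {v w : T.V} (h : p.v v = p.v w) : (T.subgraph v).Iso (T.subgraph w) := by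
  have key : ∀ v, (T.subgraph v).Iso (A.withRoot (p.v v)).cover := fun v =>
    Iso.symm ⟨_, hT.isIso_coverToSubgraph v⟩ |>.trans
      ⟨_, GraphHom.UPLP.isIso_coverMap (p := p.reroot v) hp⟩
  exact (key v).trans (h ▸ (key w).symm)

end RGraph

lemma GraphEquiv.s_e_val_of_s_val_eq {A B : RGraph} {v : A.V} {w : B.V}
    (φ : GraphEquiv (A.subgraph v) (B.subgraph w)) {x : (A.subgraph v).E} (hx : A.s x.1 = v) :
    B.s (φ.e x).1 = w := by
  have hroot : (A.subgraph v).s x = (A.subgraph v).root := Subtype.ext hx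
  exact congrArg Subtype.val ((φ.s_eq x).trans (by rw [hroot, φ.root_eq]))

namespace RGraph

variable {T : RGraph}

def coneSetoid (T : RGraph) : Setoid T.V where
  r v w := (T.subgraph v).Iso (T.subgraph w)
  iseqv := ⟨fun _ => Iso.refl _, Iso.symm, Iso.trans⟩

abbrev ConeType (T : RGraph) : Type := Quotient T.coneSetoid

noncomputable def coneRep (v : T.V) : T.V := (Quotient.mk T.coneSetoid v).out

lemma coneRep_coneRep (v : T.V) : T.coneRep (T.coneRep v) = T.coneRep v :=
  congrArg Quotient.out (Quotient.out_eq _)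

noncomputable def toConeRep (v : T.V) : GraphEquiv (T.subgraph v) (T.subgraph (T.coneRep v)) :=
  Classical.choice (iso_iff_nonempty_graphEquiv.1 (Quotient.mk_out (s := T.coneSetoid) v).symm)

lemma s_toConeRep_e (e : T.E) :
    T.s ((T.toConeRep (T.s e)).e ⟨e, T.reach_self _⟩).1 = T.coneRep (T.s e) :=
  GraphEquiv.s_e_val_of_s_val_eq _ (x := ⟨e, _⟩) rfl

def coneTypeGraph (T : RGraph) : RGraph where
  V := T.ConeType
  E := {e : T.E // T.coneRep (T.s e) = T.s e}
  s e := Quotient.mk _ (T.s e.1)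
  t e := Quotient.mk _ (T.t e.1)
  root := Quotient.mk _ T.root

noncomputable def toConeTypeGraph (T : RGraph) : GraphHom T T.coneTypeGraph where
  v := Quotient.mk _
  e e := ⟨((T.toConeRep (T.s e)).e ⟨e, T.reach_self _⟩).1, by
    rw [s_toConeRep_e, coneRep_coneRep]⟩
  root_eq := rfl
  s_eq e := by
    show Quotient.mk _ (T.s _) = Quotient.mk _ (T.s e)
    rw [s_toConeRep_e]
    exact Quotient.out_eq _
  t_eq e := by
    apply Quotient.sound
    have ht := congrArg Subtype.val ((T.toConeRep (T.s e)).t_eq ⟨e, T.reach_self _⟩)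
    have h := (iso_subgraph_of_graphEquiv (T.toConeRep (T.s e))
      ((T.subgraph (T.s e)).t ⟨e, T.reach_self _⟩)).symm
    rw [← ht] at h
    exact h

lemma toConeTypeGraph_e_val {q : T.V} (e : T.E) (he : T.s e = q) :
    (T.toConeTypeGraph.e e).1 =
      ((T.toConeRep q).e ⟨e, by rw [he]; exact T.reach_self q⟩).1 := by
  subst he
  rfl

lemma isCovering_toConeTypeGraph (T : RGraph) : T.toConeTypeGraph.IsCovering := by
  refine ⟨Quotient.mk_surjective, GraphHom.uplp_of_outMap_bijective fun q => ⟨?_, ?_⟩⟩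
  · rintro ⟨e₁, h₁⟩ ⟨e₂, h₂⟩ h
    have h' : (T.toConeTypeGraph.e e₁).1 = (T.toConeTypeGraph.e e₂).1 :=
      congrArg (fun x => x.1.1) h
    rw [toConeTypeGraph_e_val e₁ h₁, toConeTypeGraph_e_val e₂ h₂] at h'
    have h'' := congrArg Subtype.val ((T.toConeRep q).e.injective (Subtype.ext h'))
    exact Subtype.ext h''
  · rintro ⟨⟨f, hf⟩, hfq⟩
    have hsf : T.s f = T.coneRep q := hf.symm.trans (congrArg Quotient.out hfq)
    set x := (T.toConeRep q).e.symm ⟨f, by rw [hsf]; exact T.reach_self _⟩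
    have hxq : T.s x.1 = q := (T.toConeRep q).symm.s_e_val_of_s_val_eq (x := ⟨f, _⟩) hsf
    refine ⟨⟨x.1, hxq⟩, Subtype.ext (Subtype.ext ?_)⟩
    show (T.toConeTypeGraph.e x.1).1 = f
    rw [toConeTypeGraph_e_val x.1 hxq]
    exact congrArg Subtype.val ((T.toConeRep q).e.apply_symm_apply _)

end RGraph

lemma FinManyCones.finite_coneType {T : RGraph} (h : FinManyCones T) : Finite T.ConeType := by
  obtain ⟨S, hS, hcover⟩ := h
  have := hS.to_subtype
  refine Finite.of_surjective (fun v : S => Quotient.mk T.coneSetoid v.1) ?_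
  rintro ⟨v⟩
  obtain ⟨w, hw, hvw⟩ := hcover v
  exact ⟨⟨w, hw⟩, Quotient.sound hvw.symm⟩

universe u in
lemma Function.Surjective.injective_of_mk_le {α β : Type u} [Finite β] {f : α → β}
    (hf : Function.Surjective f) (h : Cardinal.mk α ≤ Cardinal.mk β) :
    Function.Injective f := by
  have hβ := Cardinal.lt_aleph0_of_finite β
  have : Finite α := Cardinal.mk_lt_aleph0_iff.1 (h.trans_lt hβ)
  exact (hf.bijective_of_nat_card_le (Cardinal.toNat_le_toNat h hβ)).injective

/-- `A.V` maps onto the cone types, and the cone-type quotient is itself a covering quotient,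
so by minimality this map is injective. -/
theorem IsMinCovQuotient.eq_of_iso_subgraph {T A : RGraph} (hmin : IsMinCovQuotient T A)
    (hT : T.IsTree) (hcones : FinManyCones T) {p : GraphHom T A} (hp : p.IsCovering)
    {v w : T.V} (h : (T.subgraph v).Iso (T.subgraph w)) : p.v v = p.v w := by
  have := hcones.finite_coneType
  let f : A.V → T.ConeType := fun a => Quotient.mk _ (Function.surjInv hp.1 a)
  have hf : ∀ v, f (p.v v) = Quotient.mk _ v := fun v =>
    Quotient.sound (hT.iso_subgraph_of_uplp hp.2 (Function.surjInv_eq hp.1 _))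
  have hsurj : Function.Surjective f := by
    rintro ⟨v⟩
    exact ⟨p.v v, hf v⟩
  have hinj := hsurj.injective_of_mk_le (hmin.2 _ ⟨_, T.isCovering_toConeTypeGraph⟩)
  exact hinj ((hf v).trans ((Quotient.sound h).trans (hf w).symm))

/-- Aut-rigidity. Let `T` be a self-similar tree, `Ā` a minimal
covering quotient of `T` and `π : T → Ā` a covering morphism. Then every automorphism
`g` of `T` is type-preserving: `π₀ ∘ g₀ = π₀`. -/
theorem stmt13 (T : RGraph) (hT : SelfSimilarTree T) (Abar : RGraph)
    (hmin : IsMinCovQuotient T Abar) (p : GraphHom T Abar) (hp : p.IsCovering)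
    (g : GraphHom T T) (hg : g.IsIso) :
    ∀ v : T.V, p.v (g.v v) = p.v v := fun v =>
  hmin.eq_of_iso_subgraph hT.1 hT.2.2 hp ((GraphEquiv.ofIsIso g hg).subgraph v).iso.symm
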